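/- arXiv:2106.09288 — 2 statements merged into one kernel-verified Lean document; each statement's English description precedes it below -/
import Mathlib

section
/- For every m < 1, the complete elliptic integral of the first kind satisfies the interpolation inequality K(m) · K''(m) ≥ 3 (K'(m))². -/
/-- The complete elliptic integral of the first kind,
`K(m) = ∫₀¹ dζ / √((1-ζ²)(1-mζ²))`, defined for `m < 1`. -/
noncomputable def ellipticK (m : ℝ) : ℝ :=
  ∫ ζ in (0:ℝ)..1, 1 / Real.sqrt ((1 - ζ ^ 2) * (1 - m * ζ ^ 2))

/-!
Let `M_{p,q}(m) = ∫₀¹ g_{p,q}(m, ζ) dζ` with `g_{p,q}(m, ζ) = ζ^q (1-ζ²)^{-1/2} (1-mζ²)^{-p}`,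
so that `K = M_{1/2,0}`. Differentiating under the integral sign gives
`M_{p,q}' = p M_{p+1,q+2}`, hence `K' = ½ M_{3/2,2}` and `K'' = ¾ M_{5/2,4}`. The integrands
satisfy `g_{p+1,q+2}² = g_{p,q} g_{p+2,q+4}` pointwise, so Cauchy–Schwarz gives
`M_{3/2,2}² ≤ M_{1/2,0} M_{5/2,4}`, which is `K K'' ≥ 3 K'²`.
-/

open MeasureTheory Set Filter

lemma min_one_le_one_sub_mul {x s : ℝ} (hs₀ : 0 ≤ s) (hs₁ : s ≤ 1) :
    min 1 (1 - x) ≤ 1 - x * s := by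
  nlinarith [min_le_left 1 (1 - x), min_le_right 1 (1 - x)]

lemma quadratic_nonneg_of_sq_le_mul {a b c : ℝ} (ha : 0 ≤ a) (hc : 0 ≤ c) (hb : b ^ 2 ≤ a * c)
    (t : ℝ) : 0 ≤ a * (t * t) + 2 * b * t + c := by
  rcases ha.eq_or_lt with rfl | ha
  · have : b = 0 := by nlinarith
    simpa [this] using hc
  · nlinarith [sq_nonneg (t * a + b)]

theorem sq_integral_le_integral_mul_integral {α : Type*} [MeasurableSpace α] {μ : Measure α}
    {f g h : α → ℝ} (hf : Integrable f μ) (hg : Integrable g μ) (hh : Integrable h μ)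
    (hf₀ : 0 ≤ᵐ[μ] f) (hg₀ : 0 ≤ᵐ[μ] g) (hfgh : ∀ᵐ x ∂μ, h x ^ 2 ≤ f x * g x) :
    (∫ x, h x ∂μ) ^ 2 ≤ (∫ x, f x ∂μ) * ∫ x, g x ∂μ := by
  have hquad (t : ℝ) :
      0 ≤ (∫ x, f x ∂μ) * (t * t) + 2 * (∫ x, h x ∂μ) * t + ∫ x, g x ∂μ := by
    have hpt : 0 ≤ᵐ[μ] fun x => f x * (t * t) + 2 * h x * t + g x := by
      filter_upwards [hf₀, hg₀, hfgh] with x hfx hgx hx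
      exact quadratic_nonneg_of_sq_le_mul hfx hgx hx t
    have hint := integral_nonneg_of_ae hpt
    have hft : Integrable (fun x => f x * (t * t)) μ := hf.mul_const _
    have hht : Integrable (fun x => 2 * h x * t) μ := (hh.const_mul 2).mul_const _
    rwa [integral_add (f := fun x => f x * (t * t) + 2 * h x * t) (hft.add hht) hg,
      integral_add hft hht, integral_mul_const, integral_mul_const, integral_const_mul] at hint
  have hdisc := discrim_le_zero hquad
  rw [discrim] at hdisc
  linarith

namespace EllipticK

noncomputable def integrand (p : ℝ) (q : ℕ) (m ζ : ℝ) : ℝ :=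
  ζ ^ q * (1 - ζ ^ 2) ^ (-(1 / 2) : ℝ) * (1 - m * ζ ^ 2) ^ (-p)

noncomputable def moment (p : ℝ) (q : ℕ) (m : ℝ) : ℝ :=
  ∫ ζ in Ioc (0:ℝ) 1, integrand p q m ζ

variable {p : ℝ} {q : ℕ} {m ζ : ℝ}

lemma one_sub_mul_sq_pos (hm : m < 1) (hζ : ζ ∈ Icc (0:ℝ) 1) : 0 < 1 - m * ζ ^ 2 :=
  (lt_min one_pos (sub_pos.2 hm)).trans_le <|
    min_one_le_one_sub_mul (sq_nonneg ζ) (pow_le_one₀ hζ.1 hζ.2)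

lemma integrand_nonneg (hm : m < 1) (hζ : ζ ∈ Icc (0:ℝ) 1) : 0 ≤ integrand p q m ζ := by
  have hζ₀ := hζ.1
  have hζ₁ : 0 ≤ 1 - ζ ^ 2 := sub_nonneg.2 (pow_le_one₀ hζ.1 hζ.2)
  have hmζ := (one_sub_mul_sq_pos hm hζ).le
  unfold integrand
  positivity

lemma integrand_le (hp : 0 ≤ p) {c : ℝ} (hc : 0 < c) (hζ : ζ ∈ Icc (0:ℝ) 1)
    (hcm : c ≤ 1 - m * ζ ^ 2) :
    integrand p q m ζ ≤ c ^ (-p) * (1 - ζ ^ 2) ^ (-(1 / 2) : ℝ) := by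
  have h₀ : 0 ≤ (1 - ζ ^ 2) ^ (-(1 / 2) : ℝ) :=
    Real.rpow_nonneg (sub_nonneg.2 (pow_le_one₀ hζ.1 hζ.2)) _
  calc integrand p q m ζ ≤ 1 * (1 - ζ ^ 2) ^ (-(1 / 2) : ℝ) * c ^ (-p) :=
        mul_le_mul (mul_le_mul_of_nonneg_right (pow_le_one₀ hζ.1 hζ.2) h₀)
          (Real.rpow_le_rpow_of_nonpos hc hcm (neg_nonpos.2 hp))
          (Real.rpow_nonneg (hc.trans_le hcm).le _) (by simpa using h₀)
    _ = c ^ (-p) * (1 - ζ ^ 2) ^ (-(1 / 2) : ℝ) := by ring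

lemma integrableOn_one_sub_sq_rpow_neg_half :
    IntegrableOn (fun ζ : ℝ => (1 - ζ ^ 2) ^ (-(1 / 2) : ℝ)) (Ioc 0 1) := by
  have h : IntegrableOn (fun ζ : ℝ => (1 - ζ) ^ (-(1 / 2) : ℝ)) (Ioc 0 1) := by
    rw [← intervalIntegrable_iff_integrableOn_Ioc_of_le zero_le_one]
    have h₀ : IntervalIntegrable (fun x : ℝ => x ^ (-(1 / 2) : ℝ)) volume 0 1 :=
      intervalIntegral.intervalIntegrable_rpow' (by norm_num)
    simpa using (h₀.comp_sub_left 1).symm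
  refine h.mono' (by fun_prop : Measurable _).aestronglyMeasurable ?_
  filter_upwards [ae_restrict_mem measurableSet_Ioc] with ζ hζ
  rw [Real.norm_of_nonneg (Real.rpow_nonneg (by nlinarith [hζ.1, hζ.2]) _)]
  rcases hζ.2.eq_or_lt with rfl | hζ₁
  · norm_num
  · exact Real.rpow_le_rpow_of_nonpos (by linarith) (by nlinarith [hζ.1]) (by norm_num)

lemma measurable_integrand (p : ℝ) (q : ℕ) (m : ℝ) : Measurable (integrand p q m) := by
  unfold integrand; fun_prop

lemma integrableOn_integrand (hp : 0 ≤ p) (q : ℕ) (hm : m < 1) :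
    IntegrableOn (integrand p q m) (Ioc 0 1) := by
  have hc : 0 < min 1 (1 - m) := lt_min one_pos (sub_pos.2 hm)
  refine (integrableOn_one_sub_sq_rpow_neg_half.const_mul (min 1 (1 - m) ^ (-p))).mono'
    (measurable_integrand p q m).aestronglyMeasurable ?_
  filter_upwards [ae_restrict_mem measurableSet_Ioc] with ζ hζ
  have hζ' := Ioc_subset_Icc_self hζ
  rw [Real.norm_of_nonneg (integrand_nonneg hm hζ')]
  exact integrand_le hp hc hζ' (min_one_le_one_sub_mul (sq_nonneg ζ) (pow_le_one₀ hζ'.1 hζ'.2))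

lemma hasDerivAt_integrand (hmζ : 1 - m * ζ ^ 2 ≠ 0) :
    HasDerivAt (integrand p q · ζ) (p * integrand (p + 1) (q + 2) m ζ) m := by
  have h := (((hasDerivAt_id m).mul_const (ζ ^ 2)).const_sub 1).rpow_const (p := -p)
    (Or.inl hmζ) |>.const_mul (ζ ^ q * (1 - ζ ^ 2) ^ (-(1 / 2) : ℝ))
  unfold integrand
  refine h.congr_deriv ?_
  rw [id, show -p - 1 = -(p + 1) by ring]
  ring

theorem hasDerivAt_moment (hp : 0 ≤ p) (q : ℕ) (hm : m < 1) :
    HasDerivAt (moment p q) (p * moment (p + 1) (q + 2) m) m := by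
  obtain ⟨b, hmb, hb⟩ := exists_between hm
  have hc : 0 < min 1 (1 - b) := lt_min one_pos (sub_pos.2 hb)
  have hcx {x ζ : ℝ} (hx : x ∈ Iio b) (hζ : ζ ∈ Icc (0:ℝ) 1) : min 1 (1 - b) ≤ 1 - x * ζ ^ 2 :=
    (min_le_min_left 1 (by linarith [mem_Iio.1 hx])).trans
      (min_one_le_one_sub_mul (sq_nonneg ζ) (pow_le_one₀ hζ.1 hζ.2))
  have hdom := hasDerivAt_integral_of_dominated_loc_of_deriv_le
    (μ := volume.restrict (Ioc (0:ℝ) 1)) (F' := fun x ζ => p * integrand (p + 1) (q + 2) x ζ)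
    (bound := fun ζ => p * (min 1 (1 - b) ^ (-(p + 1)) * (1 - ζ ^ 2) ^ (-(1 / 2) : ℝ)))
    (Iio_mem_nhds hmb)
    (.of_forall fun x => (measurable_integrand p q x).aestronglyMeasurable)
    (integrableOn_integrand hp q hm)
    ((measurable_integrand _ _ m).const_mul p).aestronglyMeasurable ?_
    ((integrableOn_one_sub_sq_rpow_neg_half.const_mul _).const_mul p) ?_
  · have h := hdom.2
    rw [integral_const_mul] at h
    exact h
  · filter_upwards [ae_restrict_mem measurableSet_Ioc] with ζ hζ x hx
    have hζ' := Ioc_subset_Icc_self hζ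
    rw [Real.norm_of_nonneg (mul_nonneg hp (integrand_nonneg (hx.trans hb) hζ'))]
    exact mul_le_mul_of_nonneg_left (integrand_le (by linarith) hc hζ' (hcx hx hζ')) hp
  · filter_upwards [ae_restrict_mem measurableSet_Ioc] with ζ hζ x hx
    exact hasDerivAt_integrand (hc.trans_le (hcx hx (Ioc_subset_Icc_self hζ))).ne'

lemma integrand_sq (hmζ : 0 < 1 - m * ζ ^ 2) :
    integrand (p + 1) (q + 2) m ζ ^ 2 = integrand p q m ζ * integrand (p + 2) (q + 4) m ζ := by
  have h : ((1 - m * ζ ^ 2) ^ (-(p + 1))) ^ 2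
      = (1 - m * ζ ^ 2) ^ (-p) * (1 - m * ζ ^ 2) ^ (-(p + 2)) := by
    rw [← Real.rpow_mul_natCast hmζ.le, ← Real.rpow_add hmζ]
    congr 1; push_cast; ring
  simp only [integrand]
  rw [mul_pow, h]
  ring

theorem moment_sq_le (hp : 0 ≤ p) (q : ℕ) (hm : m < 1) :
    moment (p + 1) (q + 2) m ^ 2 ≤ moment p q m * moment (p + 2) (q + 4) m := by
  refine sq_integral_le_integral_mul_integral (integrableOn_integrand hp q hm)
    (integrableOn_integrand (by linarith) _ hm) (integrableOn_integrand (by linarith) _ hm) ?_ ?_ ?_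
  all_goals
    filter_upwards [ae_restrict_mem measurableSet_Ioc] with ζ hζ
    have hζ' := Ioc_subset_Icc_self hζ
  · exact integrand_nonneg hm hζ'
  · exact integrand_nonneg hm hζ'
  · exact (integrand_sq (one_sub_mul_sq_pos hm hζ')).le

end EllipticK

open EllipticK

lemma ellipticK_eqOn_moment : EqOn ellipticK (moment (1 / 2) 0) (Iio 1) := by
  intro m hm
  rw [ellipticK, moment, intervalIntegral.integral_of_le zero_le_one]
  refine setIntegral_congr_fun measurableSet_Ioc fun ζ hζ => ?_
  have hζ' := Ioc_subset_Icc_self hζ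
  rw [integrand, pow_zero, one_mul, Real.sqrt_mul (sub_nonneg.2 (pow_le_one₀ hζ'.1 hζ'.2)),
    Real.rpow_neg (sub_nonneg.2 (pow_le_one₀ hζ'.1 hζ'.2)),
    Real.rpow_neg (one_sub_mul_sq_pos hm hζ').le, ← Real.sqrt_eq_rpow, ← Real.sqrt_eq_rpow,
    one_div, mul_inv]

lemma hasDerivAt_ellipticK {m : ℝ} (hm : m < 1) :
    HasDerivAt ellipticK (1 / 2 * moment (3 / 2) 2 m) m := by
  refine (hasDerivAt_moment (p := 1 / 2) (by norm_num) 0 hm).congr_of_eventuallyEq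
    (eventually_of_mem (Iio_mem_nhds hm) ellipticK_eqOn_moment) |>.congr_deriv ?_
  norm_num

lemma hasDerivAt_deriv_ellipticK {m : ℝ} (hm : m < 1) :
    HasDerivAt (deriv ellipticK) (3 / 4 * moment (5 / 2) 4 m) m := by
  refine ((hasDerivAt_moment (p := 3 / 2) (by norm_num) 2 hm).const_mul (1 / 2))
    |>.congr_of_eventuallyEq ?_ |>.congr_deriv ?_
  · filter_upwards [Iio_mem_nhds hm] with x hx using (hasDerivAt_ellipticK hx).deriv
  · norm_num; ring

/-- For every `m < 1`, the interpolation inequality `K(m) · K''(m) ≥ 3 (K'(m))²` holds. -/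
theorem ellipticK_interpolation_inequality (m : ℝ) (hm : m < 1) :
    ellipticK m * deriv (deriv ellipticK) m ≥ 3 * (deriv ellipticK m) ^ 2 := by
  rw [(hasDerivAt_deriv_ellipticK hm).deriv, (hasDerivAt_ellipticK hm).deriv,
    ellipticK_eqOn_moment hm]
  have h := moment_sq_le (by norm_num : (0:ℝ) ≤ 1 / 2) 0 hm
  norm_num at h
  linarith
end

section
/- Let ε > 0 and 0 < c < 1/(8ε), and set z_max := √((1-√(1-8cε))/(2ε)). Then 4 ∫₀^{z_max} dz / √(2c - z² + εz⁴) = 2^{5/2} / √(1+√(1-8cε)) · K((1-√(1-8cε))/(1+√(1-8cε))); equivalently, this quantity equals 2^{5/2} Φ(8cε). (This is the period τ²_ε(c) of the bounded periodic orbit of energy c of the Hamiltonian E²_ε(z₂,w₂) = w₂²/2 + z₂²/2 - εz₂⁴/2.) -/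
/-- `Φ(x) = K((1-√(1-x))/(1+√(1-x))) / √(1+√(1-x))`, defined for `x < 1`. -/
noncomputable def Phi (x : ℝ) : ℝ :=
  ellipticK ((1 - Real.sqrt (1 - x)) / (1 + Real.sqrt (1 - x))) /
    Real.sqrt (1 + Real.sqrt (1 - x))

/-!
Writing `s = √(1 - 8cε)`, the quartic `2c - z² + εz⁴` has the positive roots `a² = (1-s)/(2ε)`
and `b² = (1+s)/(2ε)`, so it equals `2c (1 - z²/a²)(1 - m z²/a²)` with `m = a²/b² = (1-s)/(1+s)`.
The substitution `z = aζ` then turns the period integral into `4a/√(2c) · K(m)`, and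
`a²/(2c) = 2/(1+s)` because `(1-s)(1+s) = 8cε`.
-/

open Real

theorem integral_one_div_sqrt_scaled_eq_ellipticK (m : ℝ) {a C : ℝ} (ha : a ≠ 0) (hC : 0 ≤ C) :
    ∫ z in (0:ℝ)..a, 1 / √(C * ((1 - (z / a) ^ 2) * (1 - m * (z / a) ^ 2))) =
      a / √C * ellipticK m := by
  have hsplit : ∀ ζ : ℝ, 1 / √(C * ((1 - ζ ^ 2) * (1 - m * ζ ^ 2))) =
      (√C)⁻¹ * (1 / √((1 - ζ ^ 2) * (1 - m * ζ ^ 2))) := fun ζ => by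
    rw [sqrt_mul hC, one_div, mul_inv, one_div]
  rw [intervalIntegral.integral_comp_div
      (fun ζ => 1 / √(C * ((1 - ζ ^ 2) * (1 - m * ζ ^ 2)))) ha,
    zero_div, div_self ha, smul_eq_mul]
  simp only [hsplit, intervalIntegral.integral_const_mul, ellipticK]
  ring

theorem quartic_eq_factored {ε c s a : ℝ} (hs : s ^ 2 = 1 - 8 * c * ε)
    (ha : a ^ 2 = (1 - s) / (2 * ε)) (ha0 : a ≠ 0) (hs1 : 1 + s ≠ 0) (z : ℝ) :
    2 * c - z ^ 2 + ε * z ^ 4 =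
      2 * c * ((1 - (z / a) ^ 2) * (1 - (1 - s) / (1 + s) * (z / a) ^ 2)) := by
  have hε : ε ≠ 0 := by rintro rfl; simp [ha0] at ha
  have hs1' : 1 - s ≠ 0 := by rintro h; simp [h, ha0] at ha
  rw [div_pow, ha]
  field_simp
  linear_combination (z ^ 2 - ε * z ^ 4) * hs

theorem two_rpow_five_halves : (2:ℝ) ^ ((5:ℝ) / 2) = 4 * √2 := by
  rw [show (5:ℝ) / 2 = 2 + 1 / 2 by norm_num, rpow_add two_pos, rpow_two, sqrt_eq_rpow]
  norm_num

theorem four_mul_sqrt_div_sqrt_eq_rpow_div_sqrt {ε c s : ℝ} (hε : 0 < ε) (hc : 0 < c)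
    (hs : s ^ 2 = 1 - 8 * c * ε) (hs1 : 0 < 1 + s) :
    4 * (√((1 - s) / (2 * ε)) / √(2 * c)) = (2:ℝ) ^ ((5:ℝ) / 2) / √(1 + s) := by
  have hratio : (1 - s) / (2 * ε) / (2 * c) = 2 / (1 + s) := by
    field_simp
    linear_combination -hs
  rw [← sqrt_div' _ (by positivity), hratio, sqrt_div' _ hs1.le, two_rpow_five_halves]
  ring

/-- The period `τ²_ε(c) = 4 ∫₀^{z_max} dz/√(2c - z² + εz⁴)` of the bounded periodic orbit of
energy `0 < c < 1/(8ε)` of the Hamiltonian `E²_ε(z₂,w₂) = w₂²/2 + z₂²/2 - εz₂⁴/2` equals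
`2^{5/2}/√(1+√(1-8cε)) · K((1-√(1-8cε))/(1+√(1-8cε)))`, i.e. equals `2^{5/2} Φ(8cε)`. -/
theorem period_tau2 (ε c : ℝ) (hε : 0 < ε) (hc : 0 < c) (hc' : c < 1 / (8 * ε)) :
    (4 * ∫ z in (0:ℝ)..Real.sqrt ((1 - Real.sqrt (1 - 8 * c * ε)) / (2 * ε)),
        1 / Real.sqrt (2 * c - z ^ 2 + ε * z ^ 4)) =
      (2:ℝ) ^ ((5:ℝ) / 2) / Real.sqrt (1 + Real.sqrt (1 - 8 * c * ε)) *
        ellipticK ((1 - Real.sqrt (1 - 8 * c * ε)) / (1 + Real.sqrt (1 - 8 * c * ε))) ∧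
    (4 * ∫ z in (0:ℝ)..Real.sqrt ((1 - Real.sqrt (1 - 8 * c * ε)) / (2 * ε)),
        1 / Real.sqrt (2 * c - z ^ 2 + ε * z ^ 4)) =
      (2:ℝ) ^ ((5:ℝ) / 2) * Phi (8 * c * ε) := by
  have h8 : 8 * c * ε < 1 := by
    rw [lt_div_iff₀ (by positivity)] at hc'
    linarith
  set s := √(1 - 8 * c * ε)
  have hs : s ^ 2 = 1 - 8 * c * ε := sq_sqrt (by linarith)
  have hs0 : 0 ≤ s := sqrt_nonneg _
  have hs1 : s < 1 := by nlinarith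
  set a := √((1 - s) / (2 * ε))
  have ha : a ^ 2 = (1 - s) / (2 * ε) := sq_sqrt (by bound)
  have ha0 : a ≠ 0 := (sqrt_pos.mpr (by bound)).ne'
  have hperiod : (4 * ∫ z in (0:ℝ)..a, 1 / √(2 * c - z ^ 2 + ε * z ^ 4)) =
      (2:ℝ) ^ ((5:ℝ) / 2) / √(1 + s) * ellipticK ((1 - s) / (1 + s)) := by
    simp only [quartic_eq_factored hs ha ha0 (by linarith : 1 + s ≠ 0),
      integral_one_div_sqrt_scaled_eq_ellipticK _ ha0 (by positivity : 0 ≤ 2 * c),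
      ← four_mul_sqrt_div_sqrt_eq_rpow_div_sqrt hε hc hs (by linarith)]
    ring
  refine ⟨hperiod, ?_⟩
  rw [hperiod, Phi]
  ring
end
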